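/- arXiv:2305.11680 — 3 statements merged into one kernel-verified Lean document; each statement's English description precedes it below -/
import Mathlib

section
/- Let F = P_{ℓ_1} ∪ (⋃_{j=1}^q S_{a_j}) with ℓ_1 ≥ 2, q ≥ 1, and a_j ≥ max{3, ℓ_1 − 1} for every j ∈ [q]. Let n = q + d(ℓ_1 − 1) + r with d ≥ 0 and 0 ≤ r < ℓ_1 − 1. Then the graph G_2(n, q, ℓ_1) = K_q ∨ (dK_{ℓ_1−1} ∪ K_r) contains no subgraph isomorphic to F. -/
open SimpleGraph Finset

/-- `G` contains a copy of `H` (a subgraph isomorphic to `H`). -/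
def ContainsCopy {V W : Type*} (H : SimpleGraph W) (G : SimpleGraph V) : Prop :=
  ∃ f : H →g G, Function.Injective f

/-- `G` is `H`-free: it contains no subgraph isomorphic to `H`. -/
def IsFree {V W : Type*} (H : SimpleGraph W) (G : SimpleGraph V) : Prop :=
  ¬ ContainsCopy H G

/-- The Turán number `ex(n, H)`: the maximum number of edges of an `H`-free
graph on `n` vertices. -/
noncomputable def exNum {W : Type*} (n : ℕ) (H : SimpleGraph W) : ℕ :=
  sSup {m | ∃ G : SimpleGraph (Fin n), IsFree H G ∧ G.edgeSet.ncard = m}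

/-- `G` is an extremal (`H`-free with `ex(n,H)` edges) graph on `n` vertices. -/
def IsExtremal {W : Type*} (n : ℕ) (H : SimpleGraph W) (G : SimpleGraph (Fin n)) : Prop :=
  IsFree H G ∧ G.edgeSet.ncard = exNum n H

/-- Disjoint union of an indexed family of graphs. -/
def sigmaUnion {ι : Type*} {V : ι → Type*} (G : ∀ i, SimpleGraph (V i)) :
    SimpleGraph (Σ i, V i) where
  Adj x y := ∃ (i : ι) (u v : V i), (G i).Adj u v ∧ x = ⟨i, u⟩ ∧ y = ⟨i, v⟩
  symm := by
    constructor
    rintro x y ⟨i, u, v, h, rfl, rfl⟩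
    exact ⟨i, v, u, h.symm, rfl, rfl⟩
  loopless := by
    constructor
    rintro x ⟨i, u, v, h, rfl, he⟩
    simp only [Sigma.mk.inj_iff, heq_eq_eq, true_and] at he
    exact (G i).loopless.irrefl u (he ▸ h)

/-- Disjoint union of two graphs on the sum type. -/
def dUnion {α β : Type*} (G : SimpleGraph α) (H : SimpleGraph β) :
    SimpleGraph (α ⊕ β) where
  Adj x y := Sum.LiftRel G.Adj H.Adj x y
  symm := by
    constructor
    rintro x y (h | h)
    · exact Sum.LiftRel.inl h.symm
    · exact Sum.LiftRel.inr h.symm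
  loopless := by
    constructor
    rintro x (h | h)
    · exact G.loopless.irrefl _ h
    · exact H.loopless.irrefl _ h

/-- The join `G ∨ H` of two graphs: disjoint union plus all edges in between. -/
def joinG {α β : Type*} (G : SimpleGraph α) (H : SimpleGraph β) :
    SimpleGraph (α ⊕ β) where
  Adj x y := match x, y with
    | .inl u, .inl v => G.Adj u v
    | .inr u, .inr v => H.Adj u v
    | .inl _, .inr _ => True
    | .inr _, .inl _ => True
  symm := by
    constructor
    rintro (u | u) (v | v) h
    · exact h.symm
    · trivial
    · trivial
    · exact h.symm
  loopless := by
    constructor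
    rintro (u | u) h
    · exact G.loopless.irrefl _ h
    · exact H.loopless.irrefl _ h

/-- The star `S_a` with `a` edges (`a + 1` vertices), centered at `0`. -/
def starGraph (a : ℕ) : SimpleGraph (Fin (a + 1)) where
  Adj x y := x ≠ y ∧ (x = 0 ∨ y = 0)
  symm := ⟨fun _ _ ⟨h1, h2⟩ => ⟨h1.symm, h2.symm⟩⟩
  loopless := ⟨fun _ h => h.1 rfl⟩

/-- The matching `M_k`: `(k/2) K_2` if `k` is even, `((k-1)/2) K_2 ∪ K_1` if `k` is odd. -/
def matchingGraph (k : ℕ) : SimpleGraph (Fin k) where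
  Adj x y := x ≠ y ∧ (x : ℕ) / 2 = (y : ℕ) / 2
  symm := ⟨fun _ _ ⟨h1, h2⟩ => ⟨h1.symm, h2.symm⟩⟩
  loopless := ⟨fun _ h => h.1 rfl⟩

/-- `k` disjoint copies of the graph `G`. -/
def kCopies {α : Type*} (k : ℕ) (G : SimpleGraph α) : SimpleGraph (Σ _ : Fin k, α) :=
  sigmaUnion fun _ => G

/-- The linear forest `⋃_{i=1}^p P_{ℓ i}`. -/
def pathForest (p : ℕ) (ℓ : Fin p → ℕ) : SimpleGraph (Σ i, Fin (ℓ i)) :=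
  sigmaUnion fun i => pathGraph (ℓ i)

/-- The star forest `⋃_{j=1}^q S_{a j}`. -/
def starForest (q : ℕ) (a : Fin q → ℕ) : SimpleGraph (Σ j, Fin (a j + 1)) :=
  sigmaUnion fun j => starGraph (a j)

/-- The path-star forest `(⋃_{i=1}^p P_{ℓ i}) ∪ (⋃_{j=1}^q S_{a j})`. -/
def pathStarForest (p q : ℕ) (ℓ : Fin p → ℕ) (a : Fin q → ℕ) :
    SimpleGraph ((Σ i, Fin (ℓ i)) ⊕ (Σ j, Fin (a j + 1))) :=
  dUnion (pathForest p ℓ) (starForest q a)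

/-- `δ_F = Σ_i ⌊ℓ_i / 2⌋`. -/
def deltaF (p : ℕ) (ℓ : Fin p → ℕ) : ℕ := ∑ i, ℓ i / 2

/-- `μ_F = 1` if (`p = 1` and `ℓ_1` even) or (`p ≥ 2` and some `ℓ_i ≠ 3`), else `1/2`. -/
def muF (p : ℕ) (ℓ : Fin p → ℕ) : ℚ :=
  if (p = 1 ∧ ∀ i, Even (ℓ i)) ∨ (2 ≤ p ∧ ∃ i, ℓ i ≠ 3) then 1 else 1/2

/-- `β_F = q + δ_F − μ_F`. -/
def betaF (p q : ℕ) (ℓ : Fin p → ℕ) : ℚ :=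
  (q : ℚ) + (deltaF p ℓ : ℚ) - muF p ℓ

/-- `G_1(n,k) = K_k ∨ K̄_{n-k}`. -/
def g1 (n k : ℕ) : SimpleGraph (Fin k ⊕ Fin (n - k)) :=
  joinG (⊤ : SimpleGraph (Fin k)) (⊥ : SimpleGraph (Fin (n - k)))

/-- `G_1⁺(n,k) = K_k ∨ (K_2 ∪ K̄_{n-k-2})`. -/
def g1plus (n k : ℕ) : SimpleGraph (Fin k ⊕ (Fin 2 ⊕ Fin (n - k - 2))) :=
  joinG (⊤ : SimpleGraph (Fin k))
    (dUnion (⊤ : SimpleGraph (Fin 2)) (⊥ : SimpleGraph (Fin (n - k - 2))))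

/-- `G_2(n,k,ℓ) = K_k ∨ (d K_{ℓ-1} ∪ K_r)` where `n = k + d(ℓ-1) + r`. -/
def g2 (k d ℓ r : ℕ) :
    SimpleGraph (Fin k ⊕ ((Σ _ : Fin d, Fin (ℓ - 1)) ⊕ Fin r)) :=
  joinG (⊤ : SimpleGraph (Fin k))
    (dUnion (kCopies d (⊤ : SimpleGraph (Fin (ℓ - 1)))) (⊤ : SimpleGraph (Fin r)))

/-- `G(s) = K_q ∨ ( (d-s-1) K_{ℓ-1} ∪ ( K_{(ℓ-2)/2} ∨ K̄_{ℓ/2 + s(ℓ-1) + r} ) )`. -/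
def gS (q ℓ d r s : ℕ) :
    SimpleGraph (Fin q ⊕ ((Σ _ : Fin (d - s - 1), Fin (ℓ - 1)) ⊕
      (Fin ((ℓ - 2) / 2) ⊕ Fin (ℓ / 2 + s * (ℓ - 1) + r)))) :=
  joinG (⊤ : SimpleGraph (Fin q))
    (dUnion (kCopies (d - s - 1) (⊤ : SimpleGraph (Fin (ℓ - 1))))
      (joinG (⊤ : SimpleGraph (Fin ((ℓ - 2) / 2)))
        (⊥ : SimpleGraph (Fin (ℓ / 2 + s * (ℓ - 1) + r)))))

/-!
Each component of `F` (the path `P_ℓ₁` and every star `S_{a_j}`) is connected with at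
least `ℓ₁` vertices, whereas every component of `G₂ − K_q = d K_{ℓ₁-1} ∪ K_r` has fewer
than `ℓ₁` vertices. Hence each of the `q + 1` components of a copy of `F` in `G₂` uses a
vertex of `K_q`, which is impossible.
-/

theorem SimpleGraph.Reachable.eq_of_forall_adj {V κ : Type*} {G : SimpleGraph V} {c : V → κ}
    (hc : ∀ x y, G.Adj x y → c x = c y) {x y : V} (h : G.Reachable x y) : c x = c y := by
  obtain ⟨p⟩ := h
  induction p with
  | nil => rfl
  | cons hxy _ ih => exact (hc _ _ hxy).trans ih

theorem isFree_of_card_lt {V W : Type*} [Fintype V] [Fintype W] (F : SimpleGraph W)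
    (G : SimpleGraph V) (h : Fintype.card V < Fintype.card W) : IsFree F G :=
  fun ⟨f, hf⟩ => (Fintype.card_le_of_injective f hf).not_gt h

theorem ContainsCopy.of_factorsThrough {W V V' : Type*} {F : SimpleGraph W} {G : SimpleGraph V}
    {G' : SimpleGraph V'} (f : F →g G') (hf : Function.Injective f) (e : G ↪g G')
    (hfe : ∀ w, ∃ u, f w = e u) : ContainsCopy F G := by
  choose g hg using hfe
  refine ⟨⟨g, fun {v w} hvw => ?_⟩, fun v w hvw => hf ?_⟩
  · rw [← e.map_adj_iff, ← hg, ← hg]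
    exact f.map_adj hvw
  · simp only [RelHom.coeFn_mk] at hvw
    rw [hg, hg, hvw]

def dUnionInl {α β : Type*} (G : SimpleGraph α) (H : SimpleGraph β) : G ↪g dUnion G H where
  toFun := Sum.inl
  inj' := Sum.inl_injective
  map_rel_iff' := Sum.liftRel_inl_inl

def dUnionInr {α β : Type*} (G : SimpleGraph α) (H : SimpleGraph β) : H ↪g dUnion G H where
  toFun := Sum.inr
  inj' := Sum.inr_injective
  map_rel_iff' := Sum.liftRel_inr_inr

def sigmaUnionIncl {ι : Type*} {V : ι → Type*} (G : ∀ i, SimpleGraph (V i)) (i : ι) :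
    G i ↪g sigmaUnion G where
  toFun := Sigma.mk i
  inj' := sigma_mk_injective
  map_rel_iff' := by
    refine ⟨?_, fun h => ⟨i, _, _, h, rfl, rfl⟩⟩
    rintro ⟨j, u, v, h, hu, hv⟩
    obtain ⟨rfl, hu⟩ := Sigma.mk.inj_iff.mp hu
    obtain ⟨-, hv⟩ := Sigma.mk.inj_iff.mp hv
    cases hu
    cases hv
    exact h

def joinGInr {α β : Type*} (K : SimpleGraph α) (H : SimpleGraph β) : H ↪g joinG K H where
  toFun := Sum.inr
  inj' := Sum.inr_injective
  map_rel_iff' := Iff.rfl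

theorem starGraph_connected (a : ℕ) : (_root_.starGraph a).Connected :=
  (connected_iff_exists_forall_reachable _).mpr ⟨0, fun x => by
    rcases eq_or_ne x 0 with rfl | hx
    · rfl
    · exact (show (_root_.starGraph a).Adj 0 x from ⟨hx.symm, Or.inl rfl⟩).reachable⟩

theorem isFree_dUnion {W α β : Type*} {F : SimpleGraph W} {G : SimpleGraph α}
    {H : SimpleGraph β} (hF : F.Preconnected) (hG : IsFree F G) (hH : IsFree F H) :
    IsFree F (dUnion G H) := by
  rintro ⟨f, hf⟩
  have hside : ∀ v w, (f v).isLeft = (f w).isLeft := fun v w =>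
    (hF v w).eq_of_forall_adj (c := fun w => (f w).isLeft) fun x y hxy =>
      Bool.eq_iff_iff.mpr (Sum.LiftRel.isLeft_congr (f.map_adj hxy))
  by_cases hleft : ∃ w, (f w).isLeft
  · obtain ⟨w₀, hw₀⟩ := hleft
    refine hG (.of_factorsThrough f hf (dUnionInl G H) fun w => ?_)
    exact Sum.isLeft_iff.mp ((hside w w₀).trans hw₀)
  · refine hH (.of_factorsThrough f hf (dUnionInr G H) fun w => ?_)
    exact Sum.isRight_iff.mp (Sum.not_isLeft.mp fun h => hleft ⟨w, h⟩)

theorem isFree_sigmaUnion {W ι : Type*} {V : ι → Type*} {F : SimpleGraph W}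
    {G : ∀ i, SimpleGraph (V i)} (hF : F.Connected) (hG : ∀ i, IsFree F (G i)) :
    IsFree F (sigmaUnion G) := by
  rintro ⟨f, hf⟩
  obtain ⟨w₀⟩ := hF.nonempty
  have hindex : ∀ w, (f w).1 = (f w₀).1 := fun w =>
    (hF w w₀).eq_of_forall_adj (c := fun w => (f w).1) fun x y hxy => by
      obtain ⟨i, u, v, -, hx, hy⟩ := f.map_adj hxy
      simp only [hx, hy]
  refine hG (f w₀).1 (.of_factorsThrough f hf (sigmaUnionIncl G _) fun w => ?_)
  have hw := hindex w
  generalize f w = x at hw ⊢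
  obtain ⟨i, u⟩ := x
  subst hw
  exact ⟨u, rfl⟩

theorem exists_inl_of_isFree {W α β : Type*} {F : SimpleGraph W} {K : SimpleGraph α}
    {H : SimpleGraph β} (f : F →g joinG K H) (hf : Function.Injective f) (hH : IsFree F H) :
    ∃ w u, f w = Sum.inl u := by
  by_contra! hleft
  refine hH (.of_factorsThrough f hf (joinGInr K H) fun w => ?_)
  rcases hw : f w with u | u
  · exact absurd hw (hleft w u)
  · exact ⟨u, rfl⟩

theorem card_le_of_forall_exists_inl {W ι α β : Type*} [Fintype ι] [Fintype α]
    (f : W → α ⊕ β) (hf : Function.Injective f) (p : W → ι)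
    (h : ∀ i, ∃ w u, p w = i ∧ f w = Sum.inl u) : Fintype.card ι ≤ Fintype.card α := by
  choose w u hp hu using h
  refine Fintype.card_le_of_injective u fun i j hij => ?_
  rw [← hp i, ← hp j, hf ((hu i).trans ((congrArg Sum.inl hij).trans (hu j).symm))]

theorem g2_is_free_general (ℓ₁ q d r : ℕ) (a : Fin q → ℕ)
    (ha : ∀ j, max 3 (ℓ₁ - 1) ≤ a j) (hr : r < ℓ₁ - 1) :
    IsFree (pathStarForest 1 q (fun _ => ℓ₁) a) (g2 q d ℓ₁ r) := by
  have hfree : ∀ {W : Type} [Fintype W] {X : SimpleGraph W}, X.Connected →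
      ℓ₁ ≤ Fintype.card W →
      IsFree X (dUnion (kCopies d (⊤ : SimpleGraph (Fin (ℓ₁ - 1)))) (⊤ : SimpleGraph (Fin r))) :=
    fun hX hcard => isFree_dUnion hX.preconnected
      (isFree_sigmaUnion hX fun _ =>
        isFree_of_card_lt _ _ (by simp only [Fintype.card_fin]; omega))
      (isFree_of_card_lt _ _ (by simp only [Fintype.card_fin]; omega))
  rintro ⟨f, hf⟩
  have hmeet : ∀ c, ∃ w u, Sum.map Sigma.fst Sigma.fst w = c ∧ f w = Sum.inl u := by
    rintro (i | j)
    · let ι : pathGraph ℓ₁ ↪g pathStarForest 1 q (fun _ => ℓ₁) a :=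
        (dUnionInl _ _).comp (sigmaUnionIncl (fun _ => pathGraph ℓ₁) i)
      have hpath : (pathGraph ℓ₁).Connected :=
        { preconnected := pathGraph_preconnected ℓ₁, nonempty := ⟨⟨0, by omega⟩⟩ }
      obtain ⟨x, u, hu⟩ := exists_inl_of_isFree (f.comp ι.toHom) (hf.comp ι.injective)
        (hfree hpath (by simp))
      exact ⟨ι x, u, rfl, hu⟩
    · let ι : _root_.starGraph (a j) ↪g pathStarForest 1 q (fun _ => ℓ₁) a :=
        (dUnionInr _ _).comp (sigmaUnionIncl (fun j => _root_.starGraph (a j)) j)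
      obtain ⟨x, u, hu⟩ := exists_inl_of_isFree (f.comp ι.toHom) (hf.comp ι.injective)
        (hfree (starGraph_connected _) (by have := ha j; simp only [Fintype.card_fin]; omega))
      exact ⟨ι x, u, rfl, hu⟩
  simpa using card_le_of_forall_exists_inl f hf _ hmeet

theorem g2_is_free (ℓ₁ q n d r : ℕ) (a : Fin q → ℕ)
    (hℓ : 2 ≤ ℓ₁) (hq : 1 ≤ q)
    (ha : ∀ j, max 3 (ℓ₁ - 1) ≤ a j)
    (hn : n = q + d * (ℓ₁ - 1) + r) (hr : r < ℓ₁ - 1) :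
    IsFree (pathStarForest 1 q (fun _ => ℓ₁) a) (g2 q d ℓ₁ r) :=
  g2_is_free_general ℓ₁ q d r a ha hr
end

section
/- Let F = (⋃_{i=1}^p P_{ℓ_i}) ∪ (⋃_{j=1}^q S_{a_j}) be a path-star forest with p ≥ 2, q ≥ 1, a_j ≥ 3 for all j, ℓ_i ≥ 2 for all i, and ℓ_i ≠ 3 for at least one i. Then for every n ≥ q + δ_F + 1, the graph G_1(n, q + δ_F − 1) contains no subgraph isomorphic to F; moreover, if all ℓ_i are odd, then G_1^+(n, q + δ_F − 1) contains no subgraph isomorphic to F. -/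
open SimpleGraph Finset

/-!
In `K_k ∨ H`, an edge of a copy of `F` whose image is not an edge of `H` has an endpoint in
`K_k`. For `H = K̄` this puts a clique vertex on each edge `{2t, 2t+1}` of every path, hence
`⌊ℓ/2⌋` of them per path, and one on every star. For `H = K_2 ∪ K̄`, injectivity lets at most
one edge of `F` land on the edge of `H`: a star still has an edge avoiding it, and a path on
`2m+1` vertices has two disjoint families of `m` disjoint edges, `{2t, 2t+1}` and
`{2t+1, 2t+2}`, one of which avoids it. Either way a copy of `F` needs `q + δ_F > k` clique
vertices.
-/

namespace Finset

theorem le_card_of_forall_mem_or_mem {C : Finset ℕ} {c m : ℕ}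
    (h : ∀ t < m, c + 2 * t ∈ C ∨ c + 2 * t + 1 ∈ C) : m ≤ #C := by
  calc m = #(range m) := (card_range m).symm
    _ ≤ #C := by
      refine card_le_card_of_injOn
        (fun t => if c + 2 * t ∈ C then c + 2 * t else c + 2 * t + 1) ?_ ?_
      · intro t ht
        have := h t (mem_range.1 ht)
        dsimp only
        split_ifs with h' <;> tauto
      · intro t _ t' _ htt'
        dsimp only at htt'
        split_ifs at htt' <;> omega

end Finset

section Join

variable {V α β : Type*} {F : SimpleGraph V} {G : SimpleGraph α} {H : SimpleGraph β}

theorem SimpleGraph.Hom.exists_adj_of_not_isLeft (g : F →g joinG G H) {x y : V}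
    (hxy : F.Adj x y) (hx : ¬ (g x).isLeft) (hy : ¬ (g y).isLeft) :
    ∃ u v, g x = .inr u ∧ g y = .inr v ∧ H.Adj u v := by
  have hadj := g.map_adj hxy
  cases hgx : g x <;> cases hgy : g y <;> simp_all
  exact hadj

theorem SimpleGraph.Hom.isLeft_or_isLeft_of_adj (g : F →g joinG G (⊥ : SimpleGraph β))
    {x y : V} (hxy : F.Adj x y) : (g x).isLeft ∨ (g y).isLeft := by
  by_contra! h
  obtain ⟨u, v, -, -, huv⟩ := g.exists_adj_of_not_isLeft hxy h.1 h.2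
  exact huv

theorem SimpleGraph.Hom.sym2_eq_of_not_isLeft (g : F →g joinG G H)
    (hg : Function.Injective g) (hH : H.edgeSet.Subsingleton) {x y x' y' : V}
    (hxy : F.Adj x y) (hx'y' : F.Adj x' y') (hx : ¬ (g x).isLeft) (hy : ¬ (g y).isLeft)
    (hx' : ¬ (g x').isLeft) (hy' : ¬ (g y').isLeft) : s(x, y) = s(x', y') := by
  obtain ⟨u, v, hu, hv, huv⟩ := g.exists_adj_of_not_isLeft hxy hx hy
  obtain ⟨u', v', hu', hv', hu'v'⟩ := g.exists_adj_of_not_isLeft hx'y' hx' hy'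
  have := congrArg (Sym2.map (Sum.inr : β → α ⊕ β))
    (hH (H.mem_edgeSet.2 huv) (H.mem_edgeSet.2 hu'v'))
  apply Sym2.map.injective hg
  simpa only [Sym2.map_mk, hu, hv, hu', hv'] using this

end Join

section Components

variable {α β : Type*} {G : SimpleGraph α} {H : SimpleGraph β} {L : ℕ}

theorem div_two_le_card_isLeft_of_bot (g : pathGraph L →g joinG G (⊥ : SimpleGraph β)) :
    L / 2 ≤ #{x | (g x).isLeft} := by
  rw [← card_map Fin.valEmbedding]
  refine le_card_of_forall_mem_or_mem (c := 0) fun t ht => ?_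
  rw [zero_add]
  refine (g.isLeft_or_isLeft_of_adj (x := ⟨2 * t, by omega⟩) (y := ⟨2 * t + 1, by omega⟩)
    (pathGraph_adj.2 (.inl rfl))).imp ?_ ?_ <;>
  exact fun h => mem_map.2 ⟨_, mem_filter.2 ⟨mem_univ _, h⟩, rfl⟩

theorem div_two_le_card_isLeft_of_odd (g : pathGraph L →g joinG G H)
    (hg : Function.Injective g) (hH : H.edgeSet.Subsingleton) (hL : Odd L) :
    L / 2 ≤ #{x | (g x).isLeft} := by
  obtain ⟨m, rfl⟩ := hL
  set C := (univ.filter fun x => (g x).isLeft).map Fin.valEmbedding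
  have hC : ∀ i (hi : i < 2 * m + 1), (g ⟨i, hi⟩).isLeft → i ∈ C :=
    fun i hi h => mem_map.2 ⟨⟨i, hi⟩, mem_filter.2 ⟨mem_univ _, h⟩, rfl⟩
  have hunique : ∀ i j (hi : i + 1 < 2 * m + 1) (hj : j + 1 < 2 * m + 1),
      i ∉ C → i + 1 ∉ C → j ∉ C → j + 1 ∉ C → i = j := by
    intro i j hi hj hi₀ hi₁ hj₀ hj₁
    have e := g.sym2_eq_of_not_isLeft hg hH (pathGraph_adj.2 (.inl rfl))
      (pathGraph_adj.2 (.inl rfl)) (mt (hC i (by omega)) hi₀) (mt (hC (i + 1) hi) hi₁)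
      (mt (hC j (by omega)) hj₀) (mt (hC (j + 1) hj) hj₁)
    simp only [Sym2.eq_iff, Fin.ext_iff] at e
    omega
  rw [show (2 * m + 1) / 2 = m by omega, ← card_map Fin.valEmbedding]
  by_cases heven : ∀ t < m, 2 * t ∈ C ∨ 2 * t + 1 ∈ C
  · exact le_card_of_forall_mem_or_mem (c := 0) (by simpa only [zero_add] using heven)
  · push Not at heven
    obtain ⟨s, hs, hs₀, hs₁⟩ := heven
    refine le_card_of_forall_mem_or_mem (c := 1) fun t ht => ?_
    by_contra! ht'
    have := hunique (2 * s) (1 + 2 * t) (by omega) (by omega) hs₀ hs₁ ht'.1 ht'.2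
    omega

theorem exists_isLeft_of_starGraph {a : ℕ} (g : _root_.starGraph a →g joinG G H)
    (hg : Function.Injective g) (hH : H.edgeSet.Subsingleton) (ha : 2 ≤ a) :
    ∃ x, (g x).isLeft := by
  by_contra h
  push Not at h
  have hadj : ∀ i (hi : i < a + 1), i ≠ 0 → (_root_.starGraph a).Adj 0 ⟨i, hi⟩ :=
    fun i _ hi => ⟨by simpa [Fin.ext_iff] using hi.symm, .inl rfl⟩
  have e := g.sym2_eq_of_not_isLeft hg hH (hadj 1 (by omega) one_ne_zero)
    (hadj 2 (by omega) two_ne_zero) (h _) (h _) (h _) (h _)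
  simp [Fin.ext_iff] at e

end Components

theorem edgeSet_dUnion_top_bot_subsingleton {β : Type*} :
    (dUnion (⊤ : SimpleGraph (Fin 2)) (⊥ : SimpleGraph β)).edgeSet.Subsingleton := by
  refine (Set.subsingleton_singleton (a := s(.inl 0, .inl 1))).anti fun e he => ?_
  induction e using Sym2.ind with
  | h x y =>
    rcases he with @⟨u, v, huv⟩ | @⟨u, v, huv⟩
    · fin_cases u <;> fin_cases v <;> simp_all [Sym2.eq_swap]
    · exact huv.elim

theorem card_filter_isLeft_le {W β : Type*} [Fintype W] {k : ℕ} (φ : W → Fin k ⊕ β)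
    (hφ : Function.Injective φ) : #{w | (φ w).isLeft} ≤ k := by
  calc #{w | (φ w).isLeft} ≤ #(univ.map (Function.Embedding.inl : Fin k ↪ Fin k ⊕ β)) :=
        card_le_card_of_injOn φ (fun w hw => by
          obtain ⟨u, hu⟩ := Sum.isLeft_iff.1 (mem_filter.1 hw).2
          simp [hu]) hφ.injOn
    _ = k := by simp

namespace pathStarForest

variable {p q : ℕ} {ℓ : Fin p → ℕ} {a : Fin q → ℕ}

def pathHom (i : Fin p) : pathGraph (ℓ i) →g pathStarForest p q ℓ a where
  toFun x := .inl ⟨i, x⟩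
  map_rel' h := .inl ⟨i, _, _, h, rfl, rfl⟩

def starHom (j : Fin q) : _root_.starGraph (a j) →g pathStarForest p q ℓ a where
  toFun y := .inr ⟨j, y⟩
  map_rel' h := .inr ⟨j, _, _, h, rfl, rfl⟩

theorem pathHom_injective (i : Fin p) :
    Function.Injective (pathHom (q := q) (ℓ := ℓ) (a := a) i) :=
  Sum.inl_injective.comp sigma_mk_injective

theorem starHom_injective (j : Fin q) :
    Function.Injective (starHom (p := p) (ℓ := ℓ) (a := a) j) :=
  Sum.inr_injective.comp sigma_mk_injective

theorem add_deltaF_le {k : ℕ} {β : Type*} {G : SimpleGraph (Fin k)} {H : SimpleGraph β}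
    (f : pathStarForest p q ℓ a →g joinG G H) (hf : Function.Injective f)
    (hpath : ∀ i, ℓ i / 2 ≤ #{x | (f (pathHom i x)).isLeft})
    (hstar : ∀ j, ∃ y, (f (starHom j y)).isLeft) :
    q + deltaF p ℓ ≤ k := by
  calc q + deltaF p ℓ = deltaF p ℓ + q := add_comm _ _
    _ ≤ ∑ i, #{x | (f (pathHom i x)).isLeft} + ∑ j, #{y | (f (starHom j y)).isLeft} := by
        refine add_le_add (sum_le_sum fun i _ => hpath i) ?_
        have hstar' : ∀ j ∈ univ, 1 ≤ #{y | (f (starHom j y)).isLeft} := fun j _ =>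
          card_pos.2 (hstar j |>.imp fun y hy => mem_filter.2 ⟨mem_univ y, hy⟩)
        simpa using sum_le_sum hstar'
    _ = #{v | (f v).isLeft} := by
        simp only [card_filter, Fintype.sum_sum_type, Fintype.sum_sigma]
        rfl
    _ ≤ k := card_filter_isLeft_le f hf

end pathStarForest

open pathStarForest in
theorem g1_is_free_general (p q : ℕ) (ℓ : Fin p → ℕ) (a : Fin q → ℕ)
    (hq : 1 ≤ q) (ha : ∀ j, 3 ≤ a j) :
    ∀ n : ℕ, q + deltaF p ℓ + 1 ≤ n →
      IsFree (pathStarForest p q ℓ a) (g1 n (q + deltaF p ℓ - 1)) ∧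
      ((∀ i, Odd (ℓ i)) →
        IsFree (pathStarForest p q ℓ a) (g1plus n (q + deltaF p ℓ - 1))) := by
  intro n _
  have hk : ¬ q + deltaF p ℓ ≤ q + deltaF p ℓ - 1 := by omega
  have ha₂ j : 2 ≤ a j := (ha j).trans' (by norm_num)
  have hbot : (⊥ : SimpleGraph (Fin (n - (q + deltaF p ℓ - 1)))).edgeSet.Subsingleton := by
    simp
  refine ⟨fun ⟨f, hf⟩ => hk ?_, fun hodd ⟨f, hf⟩ => hk ?_⟩
  · exact add_deltaF_le f hf (fun i => div_two_le_card_isLeft_of_bot (f.comp (pathHom i)))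
      fun j => exists_isLeft_of_starGraph (f.comp (starHom j))
        (hf.comp (starHom_injective j)) hbot (ha₂ j)
  · exact add_deltaF_le f hf
      (fun i => div_two_le_card_isLeft_of_odd (f.comp (pathHom i))
        (hf.comp (pathHom_injective i)) edgeSet_dUnion_top_bot_subsingleton (hodd i))
      fun j => exists_isLeft_of_starGraph (f.comp (starHom j))
        (hf.comp (starHom_injective j)) edgeSet_dUnion_top_bot_subsingleton (ha₂ j)

theorem g1_is_free (p q : ℕ) (ℓ : Fin p → ℕ) (a : Fin q → ℕ)
    (hp : 2 ≤ p) (hq : 1 ≤ q) (ha : ∀ j, 3 ≤ a j) (hℓ : ∀ i, 2 ≤ ℓ i)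
    (hne3 : ∃ i, ℓ i ≠ 3) :
    ∀ n : ℕ, q + deltaF p ℓ + 1 ≤ n →
      IsFree (pathStarForest p q ℓ a) (g1 n (q + deltaF p ℓ - 1)) ∧
      ((∀ i, Odd (ℓ i)) →
        IsFree (pathStarForest p q ℓ a) (g1plus n (q + deltaF p ℓ - 1))) :=
  g1_is_free_general p q ℓ a hq ha
end

section
/- Let F = pP_3 ∪ (⋃_{j=1}^q S_{a_j}) with p ≥ 2, q ≥ 1, and a_j ≥ 3 for all j. Then for every n ≥ p + q − 1, the graph K_{p+q−1} ∨ M_{n−p−q+1} contains no subgraph isomorphic to F. -/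
open SimpleGraph Finset

/-!
Every component of `F`, whether a `P_3` or a star with at least two leaves, contains a cherry
`u - v - w`. In `K_k ∨ M` with `M` a matching, two distinct vertices of `M` never share a
neighbour in `M`, so an embedded cherry must use a vertex of `K_k`. An embedding of `F` would
therefore send the `p + q` components to distinct vertices of `K_{p+q-1}`.
-/

open Function

variable {V W α β ι : Type*}

def IsCherry (H : SimpleGraph W) (u v w : W) : Prop :=
  H.Adj v u ∧ H.Adj v w ∧ u ≠ w

theorem IsCherry.map {H : SimpleGraph W} {H' : SimpleGraph V} {u v w : W} (h : IsCherry H u v w)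
    (f : H →g H') (hf : Injective f) : IsCherry H' (f u) (f v) (f w) :=
  ⟨f.map_adj h.1, f.map_adj h.2.1, hf.ne h.2.2⟩

theorem isCherry_pathGraph {ℓ : ℕ} (h : 3 ≤ ℓ) :
    IsCherry (pathGraph ℓ) ⟨0, by omega⟩ ⟨1, by omega⟩ ⟨2, h⟩ := by
  simp [IsCherry, pathGraph_adj]

theorem isCherry_starGraph {a : ℕ} (h : 2 ≤ a) :
    IsCherry (_root_.starGraph a) ⟨1, by omega⟩ 0 ⟨2, by omega⟩ := by
  refine ⟨⟨?_, .inl rfl⟩, ⟨?_, .inl rfl⟩, ?_⟩ <;> simp [Fin.ext_iff]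

def sigmaUnion.incl {X : ι → Type*} (G : ∀ i, SimpleGraph (X i)) (i : ι) :
    G i →g sigmaUnion G :=
  ⟨Sigma.mk i, fun h => ⟨i, _, _, h, rfl, rfl⟩⟩

def dUnion.inl (G : SimpleGraph α) (H : SimpleGraph β) : G →g dUnion G H :=
  ⟨Sum.inl, Sum.LiftRel.inl⟩

def dUnion.inr (G : SimpleGraph α) (H : SimpleGraph β) : H →g dUnion G H :=
  ⟨Sum.inr, Sum.LiftRel.inr⟩

theorem exists_isCherry_pathStarForest {p q : ℕ} {ℓ : Fin p → ℕ} {a : Fin q → ℕ}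
    (hℓ : ∀ i, 3 ≤ ℓ i) (ha : ∀ j, 2 ≤ a j) (c : Fin p ⊕ Fin q) :
    ∃ u v w, IsCherry (pathStarForest p q ℓ a) u v w ∧
      Sum.map Sigma.fst Sigma.fst u = c ∧ Sum.map Sigma.fst Sigma.fst v = c ∧
      Sum.map Sigma.fst Sigma.fst w = c := by
  rcases c with i | j
  · have := ((isCherry_pathGraph (hℓ i)).map (sigmaUnion.incl (fun i => pathGraph (ℓ i)) i)
      sigma_mk_injective).map (dUnion.inl _ (starForest q a)) Sum.inl_injective
    exact ⟨_, _, _, this, rfl, rfl, rfl⟩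
  · have := ((isCherry_starGraph (ha j)).map
      (sigmaUnion.incl (fun j => _root_.starGraph (a j)) j) sigma_mk_injective).map
      (dUnion.inr (pathForest p ℓ) _) Sum.inr_injective
    exact ⟨_, _, _, this, rfl, rfl, rfl⟩

theorem matchingGraph_eq_of_adj {k : ℕ} {x y m : Fin k} (hx : (matchingGraph k).Adj x m)
    (hy : (matchingGraph k).Adj y m) : x = y := by
  obtain ⟨hxm, hx⟩ := hx
  obtain ⟨hym, hy⟩ := hy
  rw [Ne, Fin.ext_iff] at hxm hym
  exact Fin.ext (by omega)

section Join

variable {H : SimpleGraph W} {G : SimpleGraph α} {M : SimpleGraph β}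

theorem IsCherry.exists_inl_of_join {u v w : W} (h : IsCherry H u v w)
    (hM : ∀ ⦃x y m⦄, M.Adj x m → M.Adj y m → x = y) (f : H →g joinG G M)
    (hf : Injective f) :
    ∃ x ∈ ({u, v, w} : Set W), ∃ m, f x = .inl m := by
  obtain ⟨hvu, hvw, huw⟩ := h.map f hf
  match hfu : f u, hfv : f v, hfw : f w with
  | .inl m, _, _ => exact ⟨u, by simp, m, hfu⟩
  | _, .inl m, _ => exact ⟨v, by simp, m, hfv⟩
  | _, _, .inl m => exact ⟨w, by simp, m, hfw⟩
  | .inr mu, .inr mv, .inr mw =>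
    rw [hfu, hfv] at hvu
    rw [hfv, hfw] at hvw
    rw [hfu, hfw] at huw
    exact absurd (congrArg Sum.inr (hM hvu.symm hvw.symm)) huw

theorem card_le_of_injective_hom_join [Fintype ι] [Fintype α]
    (hM : ∀ ⦃x y m⦄, M.Adj x m → M.Adj y m → x = y) (f : H →g joinG G M)
    (hf : Injective f) (comp : W → ι)
    (hcherry : ∀ i, ∃ u v w, IsCherry H u v w ∧ comp u = i ∧ comp v = i ∧ comp w = i) :
    Fintype.card ι ≤ Fintype.card α := by
  have hleft : ∀ i, ∃ x, comp x = i ∧ ∃ m, f x = .inl m := by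
    intro i
    obtain ⟨u, v, w, h, hu, hv, hw⟩ := hcherry i
    obtain ⟨x, hx, hleft⟩ := h.exists_inl_of_join hM f hf
    rcases hx with rfl | rfl | rfl <;> exact ⟨_, ‹_›, hleft⟩
  choose x hx m hm using hleft
  refine Fintype.card_le_of_injective m fun i i' h => ?_
  have hxx : x i = x i' := hf (by rw [hm i, hm i', h])
  rw [← hx i, ← hx i', hxx]

end Join

theorem join_matching_is_free_general (p q n : ℕ) (a : Fin q → ℕ)
    (hq : 1 ≤ q) (ha : ∀ j, 3 ≤ a j) :
    IsFree (pathStarForest p q (fun _ => 3) a)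
      (joinG (⊤ : SimpleGraph (Fin (p + q - 1)))
        (matchingGraph (n - (p + q - 1)))) := by
  rintro ⟨f, hf⟩
  have hcard := card_le_of_injective_hom_join (fun _ _ _ => matchingGraph_eq_of_adj) f hf _
    (exists_isCherry_pathStarForest (fun _ => le_rfl) fun j => Nat.le_of_succ_le (ha j))
  simp only [Fintype.card_sum, Fintype.card_fin] at hcard
  omega

theorem join_matching_is_free (p q n : ℕ) (a : Fin q → ℕ)
    (hp : 2 ≤ p) (hq : 1 ≤ q) (ha : ∀ j, 3 ≤ a j) (hn : p + q - 1 ≤ n) :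
    IsFree (pathStarForest p q (fun _ => 3) a)
      (joinG (⊤ : SimpleGraph (Fin (p + q - 1)))
        (matchingGraph (n - (p + q - 1)))) :=
  join_matching_is_free_general p q n a hq ha
end
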